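/- Let ψ : ℝ² → ℝ be smooth and M > 0, and set Θ(x) := ψ(x)·cos(M·x₁) and ∇⊥Θ := (−∂Θ/∂x₂, ∂Θ/∂x₁). Then div(∇⊥Θ ⊗ ∇⊥Θ) = (M²/2)·(0, ∂₂(ψ²)) + (1/2)·(1 + cos(2M x₁))·div(∇⊥ψ ⊗ ∇⊥ψ) − (M/2)·sin(2M x₁)·( (∂₂ψ)² − ψ·∂₂²ψ , ψ·∂₁∂₂ψ − ∂₁ψ·∂₂ψ ) as an identity of vector fields on ℝ². -/

import Mathlib

/-- Partial derivative of `f` in the `i`-th coordinate direction on ℝ². -/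
noncomputable def pd (i : Fin 2) (f : EuclideanSpace ℝ (Fin 2) → ℝ)
    (x : EuclideanSpace ℝ (Fin 2)) : ℝ :=
  fderiv ℝ f x (EuclideanSpace.single i 1)

/-- `(div (v ⊗ w))ᵢ = Σⱼ ∂ⱼ (vᵢ wⱼ)`. -/
noncomputable def divT (v w : EuclideanSpace ℝ (Fin 2) → Fin 2 → ℝ)
    (x : EuclideanSpace ℝ (Fin 2)) (i : Fin 2) : ℝ :=
  ∑ j : Fin 2, pd j (fun y => v y i * w y j) x

/-- Perpendicular gradient `∇⊥h = (−∂₂h, ∂₁h)`. -/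
noncomputable def gradPerp (h : EuclideanSpace ℝ (Fin 2) → ℝ)
    (x : EuclideanSpace ℝ (Fin 2)) : Fin 2 → ℝ :=
  fun j => if j = 0 then -(pd 1 h x) else pd 0 h x

section helpers
abbrev E2 := EuclideanSpace ℝ (Fin 2)
lemma hasFDerivAt_coord (x : E2) :
    HasFDerivAt (fun y : E2 => y 0) (EuclideanSpace.proj (0:Fin 2) : E2 →L[ℝ] ℝ) x :=
by
  have h := ContinuousLinearMap.hasFDerivAt (𝕜 := ℝ) (EuclideanSpace.proj (0:Fin 2)) (x := x)
  exact h

lemma hasFDerivAt_mulcoord (M : ℝ) (x : E2) :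
    HasFDerivAt (fun y : E2 => M * y 0) (M • (EuclideanSpace.proj (0:Fin 2) : E2 →L[ℝ] ℝ)) x :=
  (hasFDerivAt_coord x).const_mul M

lemma hasFDerivAt_cosM (M : ℝ) (x : E2) :
    HasFDerivAt (fun y : E2 => Real.cos (M * y 0))
      ((-Real.sin (M * x 0)) • (M • (EuclideanSpace.proj (0:Fin 2) : E2 →L[ℝ] ℝ))) x :=
  by have h := (Real.hasDerivAt_cos (M * x 0)).comp_hasFDerivAt x (hasFDerivAt_mulcoord M x); exact h

lemma hasFDerivAt_sinM (M : ℝ) (x : E2) :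
    HasFDerivAt (fun y : E2 => Real.sin (M * y 0))
      ((Real.cos (M * x 0)) • (M • (EuclideanSpace.proj (0:Fin 2) : E2 →L[ℝ] ℝ))) x :=
  by have h := (Real.hasDerivAt_sin (M * x 0)).comp_hasFDerivAt x (hasFDerivAt_mulcoord M x); exact h

lemma pd_cos0 (M : ℝ) (x : E2) :
    pd 0 (fun y : E2 => Real.cos (M * y 0)) x = -(M * Real.sin (M * x 0)) := by
  unfold pd
  rw [(hasFDerivAt_cosM M x).fderiv]
  simp [EuclideanSpace.single_apply]
  ring

lemma pd_cos1 (M : ℝ) (x : E2) :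
    pd 1 (fun y : E2 => Real.cos (M * y 0)) x = 0 := by
  unfold pd
  rw [(hasFDerivAt_cosM M x).fderiv]
  simp [EuclideanSpace.single_apply]

lemma pd_sin0 (M : ℝ) (x : E2) :
    pd 0 (fun y : E2 => Real.sin (M * y 0)) x = M * Real.cos (M * x 0) := by
  unfold pd
  rw [(hasFDerivAt_sinM M x).fderiv]
  simp [EuclideanSpace.single_apply]
  ring

lemma pd_sin1 (M : ℝ) (x : E2) :
    pd 1 (fun y : E2 => Real.sin (M * y 0)) x = 0 := by
  unfold pd
  rw [(hasFDerivAt_sinM M x).fderiv]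
  simp [EuclideanSpace.single_apply]
lemma pd_mul {f g : E2 → ℝ} {x : E2} (hf : DifferentiableAt ℝ f x)
    (hg : DifferentiableAt ℝ g x) (j : Fin 2) :
    pd j (fun y => f y * g y) x = pd j f x * g x + f x * pd j g x := by
  unfold pd
  rw [fderiv_fun_mul hf hg]
  simp
  ring

lemma pd_neg (f : E2 → ℝ) (j : Fin 2) (x : E2) : pd j (fun y => -f y) x = -pd j f x := by
  unfold pd; rw [fderiv_fun_neg]; simp

lemma pd_sub {f g : E2 → ℝ} {x : E2} (hf : DifferentiableAt ℝ f x)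
    (hg : DifferentiableAt ℝ g x) (j : Fin 2) :
    pd j (fun y => f y - g y) x = pd j f x - pd j g x := by
  unfold pd; rw [fderiv_fun_sub hf hg]; simp

lemma pd_const (c : ℝ) (j : Fin 2) (x : E2) : pd j (fun _ => c) x = 0 := by
  unfold pd; rw [fderiv_fun_const]; simp

lemma pd_const_mul {f : E2 → ℝ} {x : E2} (c : ℝ) (hf : DifferentiableAt ℝ f x) (j : Fin 2) :
    pd j (fun y => c * f y) x = c * pd j f x := by
  unfold pd; rw [fderiv_const_mul hf]; simp

lemma contDiff_pd {f : E2 → ℝ} (hf : ContDiff ℝ (⊤ : ℕ∞) f) (i : Fin 2) :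
    ContDiff ℝ (⊤ : ℕ∞) (fun y => pd i f y) :=
  (hf.fderiv_right (by simp)).clm_apply contDiff_const

lemma pd_comm {f : E2 → ℝ} (hf : ContDiff ℝ (⊤ : ℕ∞) f) (x : E2) :
    pd 0 (fun y => pd 1 f y) x = pd 1 (fun y => pd 0 f y) x := by
  have hd : ∀ y, HasFDerivAt f (fderiv ℝ f y) y := fun y =>
    (hf.differentiable (by simp) y).hasFDerivAt
  have h2 : DifferentiableAt ℝ (fderiv ℝ f) x :=
    (hf.fderiv_right (m := (⊤ : ℕ∞)) (by simp)).differentiable (by simp) x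
  have key : ∀ (i k : Fin 2), pd i (fun y => pd k f y) x
      = fderiv ℝ (fderiv ℝ f) x (EuclideanSpace.single i 1) (EuclideanSpace.single k 1) := by
    intro i k
    unfold pd
    rw [fderiv_clm_apply h2 (differentiableAt_const _)]
    simp
  rw [key, key]
  exact second_derivative_symmetric hd h2.hasFDerivAt _ _

end helpers

theorem stmt4 (ψ : EuclideanSpace ℝ (Fin 2) → ℝ) (hψ : ContDiff ℝ (⊤ : ℕ∞) ψ)
    (M : ℝ) (hM : 0 < M) :
    let Θ : EuclideanSpace ℝ (Fin 2) → ℝ := fun x => ψ x * Real.cos (M * x 0)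
    ∀ (x : EuclideanSpace ℝ (Fin 2)) (i : Fin 2),
      divT (gradPerp Θ) (gradPerp Θ) x i =
        (M^2 / 2) * (if i = 1 then pd 1 (fun y => (ψ y)^2) x else 0)
        + (1/2) * (1 + Real.cos (2 * M * x 0)) * divT (gradPerp ψ) (gradPerp ψ) x i
        - (M/2) * Real.sin (2 * M * x 0) *
            (if i = 0 then (pd 1 ψ x)^2 - ψ x * pd 1 (fun y => pd 1 ψ y) x
             else ψ x * pd 0 (fun y => pd 1 ψ y) x - pd 0 ψ x * pd 1 ψ x) := by
  intro Θ x i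
  have hψd : Differentiable ℝ ψ := hψ.differentiable (by simp)
  have hA : Differentiable ℝ (fun y => pd 0 ψ y) := (contDiff_pd hψ 0).differentiable (by simp)
  have hB : Differentiable ℝ (fun y => pd 1 ψ y) := (contDiff_pd hψ 1).differentiable (by simp)
  have hcos : Differentiable ℝ (fun y : E2 => Real.cos (M * y 0)) :=
    fun y => (hasFDerivAt_cosM M y).differentiableAt
  have hsin : Differentiable ℝ (fun y : E2 => Real.sin (M * y 0)) :=
    fun y => (hasFDerivAt_sinM M y).differentiableAt
  have hpdΘ0 : ∀ y, pd 0 Θ y = pd 0 ψ y * Real.cos (M * y 0) - M * (ψ y * Real.sin (M * y 0)) := by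
    intro y
    show pd 0 (fun z => ψ z * Real.cos (M * z 0)) y = _
    rw [pd_mul (hψd y) (hcos y), pd_cos0]
    ring
  have hpdΘ1 : ∀ y, pd 1 Θ y = pd 1 ψ y * Real.cos (M * y 0) := by
    intro y
    show pd 1 (fun z => ψ z * Real.cos (M * z 0)) y = _
    rw [pd_mul (hψd y) (hcos y), pd_cos1]
    ring
  have hg0 : ∀ y, gradPerp Θ y 0 = -(pd 1 Θ y) := fun y => by simp [gradPerp]
  have hg1 : ∀ y, gradPerp Θ y 1 = pd 0 Θ y := fun y => by simp [gradPerp]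
  have hf0 : ∀ y, gradPerp ψ y 0 = -(pd 1 ψ y) := fun y => by simp [gradPerp]
  have hf1 : ∀ y, gradPerp ψ y 1 = pd 0 ψ y := fun y => by simp [gradPerp]
  simp only [divT, Fin.sum_univ_two]
  fin_cases i
  · -- i = 0
    norm_num
    have E00 : (fun y => gradPerp Θ y 0 * gradPerp Θ y 0)
        = (fun y => (pd 1 ψ y * Real.cos (M * y 0)) * (pd 1 ψ y * Real.cos (M * y 0))) :=
      funext fun y => by rw [hg0, hpdΘ1]; ring
    have E01 : (fun y => gradPerp Θ y 0 * gradPerp Θ y 1)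
        = (fun y => (-(pd 1 ψ y * Real.cos (M * y 0))) *
            (pd 0 ψ y * Real.cos (M * y 0) - M * (ψ y * Real.sin (M * y 0)))) :=
      funext fun y => by rw [hg0, hg1, hpdΘ0, hpdΘ1]
    have F00 : (fun y => gradPerp ψ y 0 * gradPerp ψ y 0)
        = (fun y => pd 1 ψ y * pd 1 ψ y) :=
      funext fun y => by rw [hf0]; ring
    have F01 : (fun y => gradPerp ψ y 0 * gradPerp ψ y 1)
        = (fun y => (-(pd 1 ψ y)) * pd 0 ψ y) :=
      funext fun y => by rw [hf0, hf1]
    rw [E00, E01, F00, F01]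
    simp (disch := fun_prop) only
      [pd_mul, pd_mul (hB x) (hcos x), pd_mul (hA x) (hcos x), pd_mul (hψd x) (hsin x),
       pd_mul (hψd x) (hψd x), pd_mul (hB x) (hB x), pd_mul (hA x) (hA x),
       pd_mul (hB x) (hA x), pd_mul (hA x) (hB x),
       pd_sub, pd_const_mul, pd_neg, pd_const,
       pd_cos0, pd_cos1, pd_sin0, pd_sin1]
    rw [show 2*M*x 0 = 2*(M * x 0) by ring, Real.cos_two_mul, Real.sin_two_mul]
    ring
  · -- i = 1
    norm_num
    have E10 : (fun y => gradPerp Θ y 1 * gradPerp Θ y 0)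
        = (fun y => (pd 0 ψ y * Real.cos (M * y 0) - M * (ψ y * Real.sin (M * y 0))) *
            (-(pd 1 ψ y * Real.cos (M * y 0)))) :=
      funext fun y => by rw [hg0, hg1, hpdΘ0, hpdΘ1]
    have E11 : (fun y => gradPerp Θ y 1 * gradPerp Θ y 1)
        = (fun y => (pd 0 ψ y * Real.cos (M * y 0) - M * (ψ y * Real.sin (M * y 0))) *
            (pd 0 ψ y * Real.cos (M * y 0) - M * (ψ y * Real.sin (M * y 0)))) :=
      funext fun y => by rw [hg1, hpdΘ0]
    have F10 : (fun y => gradPerp ψ y 1 * gradPerp ψ y 0)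
        = (fun y => pd 0 ψ y * (-(pd 1 ψ y))) :=
      funext fun y => by rw [hf0, hf1]
    have F11 : (fun y => gradPerp ψ y 1 * gradPerp ψ y 1)
        = (fun y => pd 0 ψ y * pd 0 ψ y) :=
      funext fun y => by rw [hf1]
    have Fsq : (fun y => (ψ y)^2) = (fun y => ψ y * ψ y) := funext fun y => sq (ψ y) ▸ rfl
    rw [E10, E11, F10, F11, Fsq]
    simp (disch := fun_prop) only
      [pd_mul, pd_mul (hB x) (hcos x), pd_mul (hA x) (hcos x), pd_mul (hψd x) (hsin x),
       pd_mul (hψd x) (hψd x), pd_mul (hB x) (hB x), pd_mul (hA x) (hA x),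
       pd_mul (hB x) (hA x), pd_mul (hA x) (hB x),
       pd_sub, pd_const_mul, pd_neg, pd_const,
       pd_cos0, pd_cos1, pd_sin0, pd_sin1]
    rw [show 2*M*x 0 = 2*(M * x 0) by ring, Real.cos_two_mul, Real.sin_two_mul,
      pd_comm hψ x]
    linear_combination (M^2 * ψ x * pd 1 ψ x) * Real.sin_sq_add_cos_sq (M * x 0)
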